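/- arXiv:2605.19702 — 4 statements merged into one kernel-verified Lean document; each statement's English description precedes it below -/
import Mathlib

section
/- If for every subset S ⊆ V(G) with |S| ≤ k the orbit partition Orb(Aut_S(G)) equals P_S(G), then for any graph H ≅ G and any sequences u_1,…,u_{i+1} in V(G) and v_1,…,v_{i+1} in V(H) of individualized vertices produced by Tinhofer's algorithm with i ≤ k, there exists an isomorphism from G to H mapping u_j to v_j for all j ≤ i+1. (Inductive step: if θ : G → H is an isomorphism with θ(u_j) = v_j for j ≤ i, and u_{i+1}, θ^{-1}(v_{i+1}) lie in the same class of P_S(G) for S = {u_1,…,u_i}, then composing θ with an element β of Aut_S(G) mapping u_{i+1} to θ^{-1}(v_{i+1}) yields the required isomorphism.) -/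
open scoped Classical

noncomputable section

variable {V W : Type*}

/-- One step of color refinement: the new color of `v` encodes its old color together with
the multiset (as a sorted list) of old colors of its neighbours. -/
noncomputable def refineStep (G : SimpleGraph V) [Fintype V] (c : V → ℕ) : V → ℕ :=
  letI := Classical.decRel G.Adj
  fun v => Encodable.encode (c v, Multiset.sort (Multiset.map c (G.neighborFinset v).val) (· ≤ ·))

/-- `i` iterations of color refinement. -/
noncomputable def refineIter (G : SimpleGraph V) [Fintype V] (c : V → ℕ) (i : ℕ) : V → ℕ :=
  (refineStep G)^[i] c

/-- The stable coloring obtained by running color refinement to stabilization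
(after `|V|` rounds the induced partition is stable). -/
noncomputable def stab (G : SimpleGraph V) [Fintype V] (c : V → ℕ) : V → ℕ :=
  refineIter G c (Fintype.card V)

/-- Individualize the vertex `v`: it gets a fresh color. -/
noncomputable def indiv (c : V → ℕ) (v : V) : V → ℕ :=
  fun u => if u = v then 0 else c u + 1

/-- Individualize the set `S`: each of its vertices gets a fresh distinct color. -/
noncomputable def indivSet [Fintype V] (c : V → ℕ) (S : Set V) : V → ℕ :=
  fun u => if u ∈ S then 2 * ((Fintype.equivFin V) u : ℕ) else 2 * c u + 1

/-- Isomorphism of vertex-colored graphs. -/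
def IsoColored (G : SimpleGraph V) (H : SimpleGraph W) (c : V → ℕ) (d : W → ℕ) : Prop :=
  ∃ σ : V ≃ W, (∀ x y, G.Adj x y ↔ H.Adj (σ x) (σ y)) ∧ ∀ v, d (σ v) = c v

/-- Color-preserving automorphism of the vertex-colored graph `(G, c)`. -/
def IsAut (G : SimpleGraph V) (c : V → ℕ) (σ : V ≃ V) : Prop :=
  (∀ x y, G.Adj x y ↔ G.Adj (σ x) (σ y)) ∧ ∀ v, c (σ v) = c v

/-- The coloring obtained from `c` by refining, then successively individualizing
the vertices in the list and re-refining after each individualization. -/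
noncomputable def runIR (G : SimpleGraph V) [Fintype V] : (V → ℕ) → List V → (V → ℕ)
  | c, [] => stab G c
  | c, v :: l => runIR G (indiv (stab G c) v) l

/-- The two lists of individualized vertices are chosen, at each round, from the same
color class of the current stable colorings. -/
def ValidSeq (G : SimpleGraph V) (H : SimpleGraph W) [Fintype V] [Fintype W] :
    (V → ℕ) → (W → ℕ) → List V → List W → Prop
  | _, _, [], [] => True
  | c, d, u :: us, v :: vs =>
      stab G c u = stab H d v ∧
      ValidSeq G H (indiv (stab G c) u) (indiv (stab H d) v) us vs
  | _, _, _, _ => False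

/-- `G` is `k`-Tinhofer: for every isomorphic colored graph `H`, any `k` rounds of
individualization-and-refinement (with arbitrary valid choices of vertices)
yield isomorphic colored graphs. -/
def kTinhofer (k : ℕ) (G : SimpleGraph V) [Fintype V] (c : V → ℕ) : Prop :=
  ∀ (W' : Type) [Fintype W'] (H : SimpleGraph W') (d : W' → ℕ),
    IsoColored G H c d →
    ∀ (us : List V) (vs : List W'), us.length = k → vs.length = k →
      ValidSeq G H c d us vs → IsoColored G H (runIR G c us) (runIR H d vs)

end

/-!
Induct along the two sequences, carrying an isomorphism `θ` between the current colorings of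
`G` and `H`. The current coloring of `G` is invariant under `Aut_S(G)` and refines the coloring
that individualizes `S`, the vertices chosen so far. If `u` and `v` are chosen next, then `u` and
`θ⁻¹ v` have the same stable color, hence the same stable color after individualizing `S`, so
some `β ∈ Aut_S(G)` maps `u` to `θ⁻¹ v`, and `θ ∘ β` is an isomorphism of the individualized
colorings sending `u` to `v`.
-/

open Function

namespace Function.FactorsThrough

variable {α β γ δ : Type*} {f : α → β} {g : α → γ} {h : α → δ}

theorem trans (hgf : FactorsThrough g f) (hhg : FactorsThrough h g) : FactorsThrough h f :=
  fun _ _ hab => hhg (hgf hab)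

end Function.FactorsThrough

section ColoredIso

variable {V V' W : Type*} {G : SimpleGraph V} {G' : SimpleGraph V'} {H : SimpleGraph W}
  {a : V → ℕ} {a' : V' → ℕ} {b : W → ℕ}

theorem SimpleGraph.neighborFinset_map_of_adj_iff {σ : V ≃ W}
    (hσ : ∀ x y, G.Adj x y ↔ H.Adj (σ x) (σ y)) (x : V) [Fintype (G.neighborSet x)]
    [Fintype (H.neighborSet (σ x))] :
    (G.neighborFinset x).map σ.toEmbedding = H.neighborFinset (σ x) := by
  ext w
  obtain ⟨z, rfl⟩ := σ.surjective w
  simp [hσ]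

def IsColoredIso (G : SimpleGraph V) (H : SimpleGraph W) (a : V → ℕ) (b : W → ℕ)
    (σ : V ≃ W) : Prop :=
  (∀ x y, G.Adj x y ↔ H.Adj (σ x) (σ y)) ∧ ∀ x, b (σ x) = a x

theorem IsAut.isColoredIso {σ : V ≃ V} (hσ : IsAut G a σ) : IsColoredIso G G a a σ :=
  hσ

theorem IsColoredIso.trans {σ : V ≃ V'} {τ : V' ≃ W} (hσ : IsColoredIso G G' a a' σ)
    (hτ : IsColoredIso G' H a' b τ) : IsColoredIso G H a b (σ.trans τ) :=
  ⟨fun x y => (hσ.1 x y).trans (hτ.1 _ _), fun x => (hτ.2 _).trans (hσ.2 x)⟩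

theorem IsColoredIso.indiv_indiv {σ : V ≃ W} (hσ : IsColoredIso G H a b σ) (u : V) :
    IsColoredIso G H (indiv a u) (indiv b (σ u)) σ :=
  ⟨hσ.1, fun x => by simp [indiv, hσ.2 x]⟩

theorem IsColoredIso.apply_eq_of_indiv {σ : V ≃ W} {u : V} {v : W}
    (hσ : IsColoredIso G H (indiv a u) (indiv b v) σ) : σ u = v := by
  have h := hσ.2 u
  simp only [indiv, if_true] at h
  by_contra hne
  simp [hne] at h

-- `σ` and `θ` agree modulo `b'`, hence modulo the coarser `b`.
theorem IsColoredIso.of_factorsThrough {a' : V → ℕ} {b' : W → ℕ} {θ σ : V ≃ W}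
    (hθ : IsColoredIso G H a b θ) (hθ' : IsColoredIso G H a' b' θ) (hb : FactorsThrough b b')
    (hσ : IsColoredIso G H a' b' σ) : IsColoredIso G H a b σ :=
  ⟨hσ.1, fun x => (hb (by rw [hσ.2, hθ'.2])).trans (hθ.2 x)⟩

theorem factorsThrough_indiv (a : V → ℕ) (u : V) : FactorsThrough a (indiv a u) := by
  intro x y hxy
  by_cases hx : x = u <;> by_cases hy : y = u <;> simp_all [indiv]

end ColoredIso

section Refinement

variable {V W : Type*} [Fintype V] [Fintype W] {G : SimpleGraph V} {H : SimpleGraph W}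
  {a : V → ℕ} {b : W → ℕ}

theorem refineStep_eq_refineStep_iff {x y : V} :
    refineStep G a x = refineStep G a y ↔
      a x = a y ∧ (G.neighborFinset x).val.map a = (G.neighborFinset y).val.map a := by
  simp only [refineStep, Encodable.encode_inj, Prod.mk.injEq]
  constructor
  · rintro ⟨hxy, hN⟩
    refine ⟨hxy, ?_⟩
    simpa only [Multiset.sort_eq] using congrArg ((↑) : List ℕ → Multiset ℕ) hN
  · rintro ⟨hxy, hN⟩
    exact ⟨hxy, by congr⟩

variable (G) in
theorem factorsThrough_refineStep (a : V → ℕ) : FactorsThrough a (refineStep G a) :=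
  fun _ _ h => (refineStep_eq_refineStep_iff.mp h).1

theorem Function.FactorsThrough.refineStep {a' : V → ℕ} (h : FactorsThrough a' a) :
    FactorsThrough (refineStep G a') (refineStep G a) := by
  intro x y hxy
  obtain ⟨hxy, hN⟩ := refineStep_eq_refineStep_iff.mp hxy
  obtain ⟨e, rfl⟩ := (factorsThrough_iff a').mp h
  refine refineStep_eq_refineStep_iff.mpr ⟨congrArg e hxy, ?_⟩
  simp only [← Multiset.map_map, hN]

variable (G) in
theorem factorsThrough_refineIter (a : V → ℕ) (n : ℕ) : FactorsThrough a (refineIter G a n) := by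
  induction n with
  | zero => exact FactorsThrough.rfl
  | succ n ih =>
    simpa only [refineIter, iterate_succ_apply'] using (factorsThrough_refineStep G _).trans ih

theorem Function.FactorsThrough.refineIter {a' : V → ℕ} (h : FactorsThrough a' a) (n : ℕ) :
    FactorsThrough (refineIter G a' n) (refineIter G a n) := by
  induction n with
  | zero => exact h
  | succ n ih => simpa only [_root_.refineIter, iterate_succ_apply'] using ih.refineStep

variable (G) in
theorem factorsThrough_stab (a : V → ℕ) : FactorsThrough a (stab G a) :=
  factorsThrough_refineIter G a _

theorem Function.FactorsThrough.stab {a' : V → ℕ} (h : FactorsThrough a' a) :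
    FactorsThrough (stab G a') (stab G a) :=
  h.refineIter _

theorem IsColoredIso.refineStep {σ : V ≃ W} (hσ : IsColoredIso G H a b σ) :
    IsColoredIso G H (refineStep G a) (refineStep H b) σ := by
  refine ⟨hσ.1, fun x => ?_⟩
  simp only [_root_.refineStep]
  rw [← SimpleGraph.neighborFinset_map_of_adj_iff hσ.1, Finset.map_val, Multiset.map_map]
  simp only [comp_def, Equiv.coe_toEmbedding, hσ.2]

theorem IsColoredIso.refineIter {σ : V ≃ W} (hσ : IsColoredIso G H a b σ) (n : ℕ) :
    IsColoredIso G H (refineIter G a n) (refineIter H b n) σ := by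
  induction n with
  | zero => exact hσ
  | succ n ih => simpa only [_root_.refineIter, iterate_succ_apply'] using ih.refineStep

theorem IsColoredIso.stab {σ : V ≃ W} (hσ : IsColoredIso G H a b σ) :
    IsColoredIso G H (stab G a) (stab H b) σ := by
  simpa only [_root_.stab, Fintype.card_congr σ] using hσ.refineIter (Fintype.card V)

end Refinement

section Individualization

variable {V : Type*} [Fintype V]

theorem factorsThrough_indivSet_empty (c : V → ℕ) : FactorsThrough (indivSet c ∅) c :=
  fun x y h => by simpa [indivSet] using h

theorem indivSet_insert_of_ne (c : V → ℕ) (S : Set V) {u x : V} (hx : x ≠ u) :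
    indivSet c (insert u S) x = indivSet c S x := by
  simp [indivSet, hx]

theorem Function.FactorsThrough.indivSet_insert {c a : V → ℕ} {S : Set V}
    (h : FactorsThrough (indivSet c S) a) (u : V) :
    FactorsThrough (indivSet c (insert u S)) (indiv a u) := by
  intro x y hxy
  by_cases hx : x = u <;> by_cases hy : y = u
  · rw [hx, hy]
  all_goals simp only [indiv, hx, hy, if_true, if_false] at hxy
  · omega
  · omega
  · rw [indivSet_insert_of_ne c S hx, indivSet_insert_of_ne c S hy]
    exact h (Nat.succ_injective hxy)

end Individualization

section Tinhofer

variable {V W : Type*} [Fintype V] [Fintype W] {G : SimpleGraph V} {H : SimpleGraph W}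
  {c : V → ℕ} {k : ℕ}

theorem exists_isColoredIso_forall₂_of_validSeq
    (horb : ∀ S : Finset V, S.card ≤ k → ∀ u v : V,
      stab G (indivSet c ↑S) u = stab G (indivSet c ↑S) v →
        ∃ β : V ≃ V, IsAut G c β ∧ (∀ x ∈ S, β x = x) ∧ β u = v) :
    ∀ (us : List V) (vs : List W) (S : Finset V) (a : V → ℕ) (b : W → ℕ) (θ : V ≃ W),
      IsColoredIso G H a b θ →
      (∀ β : V ≃ V, IsAut G c β → (∀ x ∈ S, β x = x) → IsAut G a β) →
      FactorsThrough (indivSet c ↑S) a →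
      S.card + us.length ≤ k + 1 →
      ValidSeq G H a b us vs →
      ∃ σ : V ≃ W, IsColoredIso G H a b σ ∧ List.Forall₂ (fun u w => σ u = w) us vs
  | [], [], _, _, _, θ, hθ, _, _, _, _ => ⟨θ, hθ, .nil⟩
  | u :: us, v :: vs, S, a, b, θ, hθ, ha_inv, ha_fine, hlen, ⟨huv, hvalid⟩ => by
    have hS : S.card ≤ k := by simp only [List.length_cons] at hlen; omega
    have hu : stab G a u = stab G a (θ.symm v) := by
      rw [huv, ← hθ.stab.2 (θ.symm v), θ.apply_symm_apply]
    obtain ⟨β, hβ, hβS, hβu⟩ := horb S hS u (θ.symm v) (ha_fine.stab hu)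
    have hθβ : IsColoredIso G H a b (β.trans θ) := (ha_inv β hβ hβS).isColoredIso.trans hθ
    have hθβu : (β.trans θ) u = v := by simp [hβu]
    have hθβ' : IsColoredIso G H (indiv (stab G a) u) (indiv (stab H b) v) (β.trans θ) :=
      hθβu ▸ hθβ.stab.indiv_indiv u
    have ha_inv' (γ : V ≃ V) (hγ : IsAut G c γ) (hγS : ∀ x ∈ insert u S, γ x = x) :
        IsAut G (indiv (stab G a) u) γ := by
      have hγa := ha_inv γ hγ fun x hx => hγS x (Finset.mem_insert_of_mem hx)
      have := hγa.isColoredIso.stab.indiv_indiv u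
      rwa [hγS u (Finset.mem_insert_self u S)] at this
    have ha_fine' : FactorsThrough (indivSet c ↑(insert u S)) (indiv (stab G a) u) := by
      rw [Finset.coe_insert]
      exact ((factorsThrough_stab G a).trans ha_fine).indivSet_insert u
    have hlen' : (insert u S).card + us.length ≤ k + 1 := by
      have := Finset.card_insert_le u S
      simp only [List.length_cons] at hlen
      omega
    obtain ⟨σ, hσ, hσus⟩ := exists_isColoredIso_forall₂_of_validSeq horb us vs (insert u S) _ _ _
      hθβ' ha_inv' ha_fine' hlen' hvalid
    exact ⟨σ, hθβ.of_factorsThrough hθβ' ((factorsThrough_indiv _ v).trans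
      (factorsThrough_stab H b)) hσ, .cons hσ.apply_eq_of_indiv hσus⟩
  | [], _ :: _, _, _, _, _, _, _, _, _, hvalid => hvalid.elim
  | _ :: _, [], _, _, _, _, _, _, _, _, hvalid => hvalid.elim

end Tinhofer

/-- If `Orb(Aut_S(G)) = P_S(G)` for all `S` with `|S| ≤ k`, then for any `H ≅ G` and any
valid sequences of at most `k+1` individualized vertices produced by Tinhofer's algorithm,
there is an isomorphism from `G` to `H` mapping each individualized vertex of `G` to the
corresponding individualized vertex of `H`. -/
theorem exists_iso_mapping_individualized {V W : Type} [Fintype V] [Fintype W]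
    (G : SimpleGraph V) (H : SimpleGraph W) (c : V → ℕ) (d : W → ℕ) (k : ℕ)
    (hchar : ∀ S : Finset V, S.card ≤ k → ∀ u v : V,
      (stab G (indivSet c ↑S) u = stab G (indivSet c ↑S) v ↔
        ∃ σ : V ≃ V, IsAut G c σ ∧ (∀ x ∈ S, σ x = x) ∧ σ u = v))
    (hiso : IsoColored G H c d)
    (us : List V) (vs : List W)
    (hlen : us.length ≤ k + 1)
    (hvalid : ValidSeq G H c d us vs) :
    ∃ σ : V ≃ W, (∀ x y, G.Adj x y ↔ H.Adj (σ x) (σ y)) ∧ (∀ v, d (σ v) = c v) ∧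
      List.Forall₂ (fun u w => σ u = w) us vs := by
  obtain ⟨θ, hθ⟩ := hiso
  obtain ⟨σ, hσ, hσus⟩ := exists_isColoredIso_forall₂_of_validSeq
    (fun S hS u v => (hchar S hS u v).mp) us vs ∅ c d θ hθ (fun _ hβ _ => hβ)
    (by simpa using factorsThrough_indivSet_empty c) (by simpa using hlen) hvalid
  exact ⟨σ, hσ.1, hσ.2, hσus⟩
end

section
/- The class of 1-Tinhofer graphs coincides with the class of refinable graphs, i.e., a graph G is 1-Tinhofer if and only if the stable partition of color refinement on G equals the orbit partition of Aut(G). -/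
open scoped Classical

/-!
Color refinement is isomorphism-invariant, and its stable coloring refines the initial one
(each refined color encodes the previous color). Hence an isomorphism of the individualized
and refined graphs `(G, u)` and `(H, v)` must send `u` to `v` and preserve the stable colors,
so 1-Tinhofer forces every stable color class to be an orbit. Conversely, if the classes are
orbits and `σ : G ≅ H`, then `u` and `σ⁻¹ v` lie in one orbit; composing `σ` with an
automorphism moving `u` to `σ⁻¹ v` gives an isomorphism sending `u` to `v`, and invariance of
refinement under it finishes the proof.
-/

lemma neighborFinset_equiv {V W : Type*} {G : SimpleGraph V} {H : SimpleGraph W} (σ : V ≃ W)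
    (hadj : ∀ x y, G.Adj x y ↔ H.Adj (σ x) (σ y)) (v : V) [Fintype (G.neighborSet v)]
    [Fintype (H.neighborSet (σ v))] :
    H.neighborFinset (σ v) = (G.neighborFinset v).map σ.toEmbedding := by
  ext w
  obtain ⟨x, rfl⟩ := σ.surjective w
  simp [hadj]

section ColorRefinement

variable {V W : Type*} [Fintype V] [Fintype W] {G : SimpleGraph V} {H : SimpleGraph W}

lemma refineIter_succ (c : V → ℕ) (i : ℕ) :
    refineIter G c (i + 1) = refineStep G (refineIter G c i) :=
  Function.iterate_succ_apply' _ _ _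

lemma eq_of_refineStep_eq {c : V → ℕ} {d : W → ℕ} {x : V} {y : W}
    (h : refineStep G c x = refineStep H d y) : c x = d y :=
  congrArg Prod.fst (Encodable.encode_injective h)

lemma eq_of_refineIter_eq {c : V → ℕ} {d : W → ℕ} (i : ℕ) {x : V} {y : W}
    (h : refineIter G c i x = refineIter H d i y) : c x = d y := by
  induction i generalizing x y with
  | zero => exact h
  | succ i ih =>
    rw [refineIter_succ, refineIter_succ] at h
    exact ih (eq_of_refineStep_eq h)

lemma eq_of_stab_eq (hcard : Fintype.card W = Fintype.card V) {c : V → ℕ} {d : W → ℕ}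
    {x : V} {y : W} (h : stab G c x = stab H d y) : c x = d y := by
  rw [stab, stab, hcard] at h
  exact eq_of_refineIter_eq _ h

variable (σ : V ≃ W) (hadj : ∀ x y, G.Adj x y ↔ H.Adj (σ x) (σ y))
include hadj

lemma refineStep_apply_equiv {c : V → ℕ} {d : W → ℕ} (hc : ∀ v, d (σ v) = c v) (v : V) :
    refineStep H d (σ v) = refineStep G c v := by
  have hdσ : d ∘ σ.toEmbedding = c := funext hc
  rw [refineStep, refineStep, neighborFinset_equiv σ hadj, Finset.map_val, Multiset.map_map,
    hdσ, hc]

lemma refineIter_apply_equiv {c : V → ℕ} {d : W → ℕ} (hc : ∀ v, d (σ v) = c v) (i : ℕ)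
    (v : V) : refineIter H d i (σ v) = refineIter G c i v := by
  induction i generalizing v with
  | zero => exact hc v
  | succ i ih =>
    rw [refineIter_succ, refineIter_succ]
    exact refineStep_apply_equiv σ hadj ih v

lemma stab_apply_equiv {c : V → ℕ} {d : W → ℕ} (hc : ∀ v, d (σ v) = c v) (v : V) :
    stab H d (σ v) = stab G c v := by
  rw [stab, stab, ← Fintype.card_congr σ]
  exact refineIter_apply_equiv σ hadj hc _ v

end ColorRefinement

lemma indiv_apply_equiv_iff {V W : Type*} (σ : V ≃ W) {a : V → ℕ} {b : W → ℕ} {u : V} {v : W}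
    (hb : b v = a u) :
    (∀ x, indiv b v (σ x) = indiv a u x) ↔ σ u = v ∧ ∀ x, b (σ x) = a x := by
  constructor
  · intro h
    have hσu : σ u = v := by
      by_contra hne
      simpa [indiv, hne] using h u
    refine ⟨hσu, fun x => ?_⟩
    by_cases hx : x = u
    · rw [hx, hσu, hb]
    · have hσx : σ x ≠ v := fun he => hx (σ.injective (he.trans hσu.symm))
      simpa [indiv, hx, hσx] using h x
  · rintro ⟨hσu, h⟩ x
    by_cases hx : x = u
    · simp [indiv, hx, hσu]
    · have hσx : σ x ≠ v := fun he => hx (σ.injective (he.trans hσu.symm))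
      simp [indiv, hx, hσx, h x]

/-- The class of `1`-Tinhofer graphs coincides with the class of refinable graphs:
`G` is `1`-Tinhofer iff the stable partition of color refinement equals the orbit
partition of `Aut(G)`. -/
theorem oneTinhofer_iff_refinable {V : Type} [Fintype V]
    (G : SimpleGraph V) (c : V → ℕ) :
    kTinhofer 1 G c ↔
      ∀ u v : V, (stab G c u = stab G c v ↔ ∃ σ : V ≃ V, IsAut G c σ ∧ σ u = v) := by
  constructor
  · refine fun hT u v => ⟨fun huv => ?_, ?_⟩
    · obtain ⟨σ, hadj, hσ⟩ := hT V G c ⟨Equiv.refl V, fun _ _ => Iff.rfl, fun _ => rfl⟩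
        [u] [v] rfl rfl ⟨huv, trivial⟩
      obtain ⟨hσu, hσstab⟩ :=
        (indiv_apply_equiv_iff σ huv.symm).1 fun x => eq_of_stab_eq rfl (hσ x)
      exact ⟨σ, ⟨hadj, fun x => eq_of_stab_eq rfl (hσstab x)⟩, hσu⟩
    · rintro ⟨σ, ⟨hadj, hc⟩, rfl⟩
      exact (stab_apply_equiv σ hadj hc u).symm
  · intro hRef W' _ H d ⟨σ, hadj, hc⟩ us vs hus hvs hvalid
    obtain ⟨u, rfl⟩ := List.length_eq_one_iff.mp hus
    obtain ⟨v, rfl⟩ := List.length_eq_one_iff.mp hvs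
    have huv : stab H d v = stab G c u := hvalid.1.symm
    have hσstab := stab_apply_equiv σ hadj hc
    obtain ⟨τ, ⟨hτadj, hτc⟩, hτu⟩ := (hRef u (σ.symm v)).1 <| by
      rw [← hσstab (σ.symm v), σ.apply_symm_apply, huv]
    let ρ := τ.trans σ
    have hρadj : ∀ x y, G.Adj x y ↔ H.Adj (ρ x) (ρ y) := fun x y =>
      (hτadj x y).trans (hadj _ _)
    have hρind := (indiv_apply_equiv_iff ρ huv).2
      ⟨by simp [ρ, hτu], fun x => (hσstab (τ x)).trans (stab_apply_equiv τ hτadj hτc x)⟩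
    exact ⟨ρ, hρadj, stab_apply_equiv ρ hρadj hρind⟩
end

section
/- In the CFI gadget X_k with external pairs P_1,…,P_k each assigned a distinct color, every color-preserving automorphism flips an even number of the pairs P_1,…,P_k. -/
/-!
A color-preserving automorphism `σ` maps each pair `P_i` to itself and the all-zero middle
vertex to some middle vertex `t`. Since `a_i` is adjacent to the all-zero vertex, `σ a_i` is the
neighbour of `t` in `P_i`, namely `b_i` exactly when `t_i = 1`. So the flipped pairs are the
support of `t`, which has even size.
-/

open scoped Classical

/-- Even-weight binary strings of length `k`. -/
def EvenStr (k : ℕ) := {s : Fin k → Bool // Even ((Finset.univ.filter fun i => s i = true).card)}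

instance (k : ℕ) : Fintype (EvenStr k) := by unfold EvenStr; infer_instance

/-- Vertices of the CFI gadget `X_k`: external pairs `P_i = {(i, false), (i, true)}`
and middle vertices given by even-weight strings. -/
def CFIV (k : ℕ) := (Fin k × Bool) ⊕ EvenStr k

instance (k : ℕ) : Fintype (CFIV k) := by unfold CFIV; infer_instance

def CFIhalf (k : ℕ) : CFIV k → CFIV k → Prop
  | .inl (i, β), .inr s => s.1 i = β
  | _, _ => False

/-- The CFI gadget `X_k`: the middle vertex `s` is adjacent to `a_i = (i, false)`
if `s i = false` and to `b_i = (i, true)` if `s i = true`. -/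
def CFI (k : ℕ) : SimpleGraph (CFIV k) where
  Adj x y := CFIhalf k x y ∨ CFIhalf k y x
  symm := ⟨fun x y h => h.symm⟩
  loopless := ⟨fun x h => by rcases h with h | h <;> rcases x with ⟨i, β⟩ | s <;> exact h⟩

/-- Colors of `X_k`: pair `P_i` gets color `i`; all middle vertices get color `k`. -/
def CFIcolor (k : ℕ) : CFIV k → ℕ
  | .inl (i, _) => i
  | .inr _ => k

/-- `σ` flips the external pair `P_i`. -/
def CFIFlips (k : ℕ) (σ : CFIV k ≃ CFIV k) (i : Fin k) : Prop :=
  σ (.inl (i, false)) = .inl (i, true)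

def EvenStr.zero (k : ℕ) : EvenStr k := ⟨fun _ => false, by simp⟩

namespace CFI

variable {k : ℕ}

@[simp]
lemma adj_inl_inr_iff {i : Fin k} {β : Bool} {s : EvenStr k} :
    (CFI k).Adj (.inl (i, β)) (.inr s) ↔ s.1 i = β := by
  simp [CFI, CFIhalf]

lemma exists_eq_inl_of_CFIcolor_eq {v : CFIV k} {i : Fin k}
    (h : CFIcolor k v = CFIcolor k (.inl (i, false))) :
    ∃ β, v = .inl (i, β) := by
  rcases v with ⟨j, β⟩ | s
  · exact ⟨β, by rw [Fin.ext (h : (j : ℕ) = i)]⟩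
  · exact absurd h (by simp [CFIcolor, i.2.ne'])

lemma exists_eq_inr_of_CFIcolor_eq {v : CFIV k} {s : EvenStr k}
    (h : CFIcolor k v = CFIcolor k (.inr s)) :
    ∃ t, v = .inr t := by
  rcases v with ⟨j, β⟩ | t
  · exact absurd h (by simp [CFIcolor, j.2.ne])
  · exact ⟨t, rfl⟩

lemma map_inl_eq_of_map_inr_eq {σ : CFIV k → CFIV k}
    (hadj : ∀ x y, (CFI k).Adj x y → (CFI k).Adj (σ x) (σ y))
    (hcol : ∀ v, CFIcolor k (σ v) = CFIcolor k v) {s t : EvenStr k} (hst : σ (.inr s) = .inr t)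
    (i : Fin k) : σ (.inl (i, s.1 i)) = .inl (i, t.1 i) := by
  obtain ⟨β, hβ⟩ := exists_eq_inl_of_CFIcolor_eq (hcol (.inl (i, s.1 i)))
  have hadj_image := hadj _ _ (adj_inl_inr_iff.2 rfl : (CFI k).Adj (.inl (i, s.1 i)) (.inr s))
  rw [hβ, hst, adj_inl_inr_iff] at hadj_image
  rw [hβ, hadj_image]

end CFI

/-- Every color-preserving automorphism of the CFI gadget `X_k` flips an even number
of the external pairs `P_1, …, P_k`. -/
theorem CFI_even_flips (k : ℕ) (σ : CFIV k ≃ CFIV k)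
    (hadj : ∀ x y, (CFI k).Adj x y ↔ (CFI k).Adj (σ x) (σ y))
    (hcol : ∀ v, CFIcolor k (σ v) = CFIcolor k v) :
    Even ((Finset.univ.filter fun i : Fin k => CFIFlips k σ i).card) := by
  obtain ⟨t, ht⟩ := CFI.exists_eq_inr_of_CFIcolor_eq (hcol (.inr (EvenStr.zero k)))
  have flips_iff (i : Fin k) : CFIFlips k σ i ↔ t.1 i = true := by
    have hσ : σ (.inl (i, false)) = .inl (i, t.1 i) :=
      CFI.map_inl_eq_of_map_inr_eq (fun x y => (hadj x y).1) hcol ht i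
    rw [CFIFlips, hσ]
    exact Sum.inl_injective.eq_iff.trans (by simp)
  simpa only [flips_iff] using t.2
end

section
/- For the CFI gadget X_k and any subset T ⊆ {1,…,k} of even cardinality, there exists a color-preserving automorphism of X_k that flips exactly the pairs P_i with i ∈ T and fixes all other external pairs. -/
open scoped Classical

/-! The indicator `t` of `T` is itself an even-weight string, since the symmetric difference of two
even sets is even. Translating the middle vertices by `t` and swapping `P_i` exactly where `t i` is
set preserves adjacency because `s i = β ↔ s i ⊕ t i = β ⊕ t i`. -/

open Finset

theorem card_filter_xor_add_two_mul_card_filter_and {ι : Type*} [Fintype ι] (s t : ι → Bool) :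
    #{i | xor (s i) (t i)} + 2 * #{i | s i && t i} = #{i | s i} + #{i | t i} := by
  simp only [card_filter, mul_sum, ← sum_add_distrib]
  refine sum_congr rfl fun i _ => ?_
  cases s i <;> cases t i <;> rfl

theorem even_card_filter_xor {ι : Type*} [Fintype ι] {s t : ι → Bool}
    (hs : Even #{i | s i}) (ht : Even #{i | t i}) : Even #{i | xor (s i) (t i)} := by
  have h := card_filter_xor_add_two_mul_card_filter_and s t
  rw [Nat.even_iff] at hs ht ⊢
  omega

namespace EvenStr

variable {k : ℕ}

def xor (s t : EvenStr k) : EvenStr k :=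
  ⟨fun i => Bool.xor (s.1 i) (t.1 i), even_card_filter_xor s.2 t.2⟩

theorem xor_xor_cancel_right (s t : EvenStr k) : (s.xor t).xor t = s :=
  Subtype.ext <| funext fun i => Bool.bne_self_right (s.1 i) (t.1 i)

end EvenStr

namespace CFIV

variable {k : ℕ}

def flip (t : EvenStr k) : CFIV k → CFIV k
  | .inl (i, β) => .inl (i, Bool.xor β (t.1 i))
  | .inr s => .inr (s.xor t)

theorem flip_involutive (t : EvenStr k) : Function.Involutive (flip t) := by
  rintro (⟨i, β⟩ | s)
  · exact congrArg (fun γ => (.inl (i, γ) : CFIV k)) (Bool.bne_self_right β (t.1 i))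
  · exact congrArg (fun u => (.inr u : CFIV k)) (s.xor_xor_cancel_right t)

theorem cfiHalf_flip_iff (t : EvenStr k) (x y : CFIV k) :
    CFIhalf k (flip t x) (flip t y) ↔ CFIhalf k x y := by
  rcases x with ⟨i, β⟩ | s <;> rcases y with ⟨j, γ⟩ | u
  · exact Iff.rfl
  · exact Bool.xor_left_inj
  · exact Iff.rfl
  · exact Iff.rfl

theorem cfi_adj_flip_iff (t : EvenStr k) (x y : CFIV k) :
    (CFI k).Adj (flip t x) (flip t y) ↔ (CFI k).Adj x y :=
  or_congr (cfiHalf_flip_iff t x y) (cfiHalf_flip_iff t y x)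

theorem cfiColor_flip (t : EvenStr k) (v : CFIV k) : CFIcolor k (flip t v) = CFIcolor k v := by
  rcases v with ⟨i, β⟩ | s <;> rfl

end CFIV

/-- For every even-cardinality set `T` of indices there is a color-preserving
automorphism of the CFI gadget `X_k` flipping exactly the pairs `P_i` with `i ∈ T`
and fixing all other external pairs. -/
theorem CFI_exists_flip_automorphism (k : ℕ) (T : Finset (Fin k)) (hT : Even T.card) :
    ∃ σ : CFIV k ≃ CFIV k,
      (∀ x y, (CFI k).Adj x y ↔ (CFI k).Adj (σ x) (σ y)) ∧
      (∀ v, CFIcolor k (σ v) = CFIcolor k v) ∧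
      (∀ (i : Fin k) (β : Bool),
        σ (.inl (i, β)) = .inl (i, if i ∈ T then !β else β)) := by
  let t : EvenStr k := ⟨fun i => decide (i ∈ T), by simpa using hT⟩
  refine ⟨(CFIV.flip_involutive t).toPerm, fun x y => (CFIV.cfi_adj_flip_iff t x y).symm,
    CFIV.cfiColor_flip t, fun i β => congrArg (fun γ => (.inl (i, γ) : CFIV k)) ?_⟩
  by_cases hi : i ∈ T <;> simp [t, hi]
end
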